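/- Let γ : ℝ × [0,T) → ℝⁿ be a solution of the Space Curve Shortening flow such that for each t ∈ (0,T) the curve γ(·,t) has no vertical tangent lines. Then for t ∈ (0,T) the projection curve γ̄ := P_xy ∘ γ evolves by ∂_t γ̄ = c · γ̄_{s̄s̄} + (1/2) c_{s̄} · γ̄_{s̄}, where c := |x_s|² + |y_s|² with (x,y) = γ̄ and s the arc-length parameter of γ(·,t); in particular the normal component of ∂_t γ̄ equals c k̄ N̄, i.e. ∂_t γ̄ − (∂_t γ̄ · T̄) T̄ = c k̄ N̄, where T̄ = γ̄_{s̄} is the unit tangent of γ̄, N̄ is the counterclockwise rotation of T̄ by π/2, and k̄ is the signed curvature of γ̄ defined by γ̄_{s̄s̄} = k̄ N̄. -/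

import Mathlib

open Set

/-- Arc-length derivative along the curve `c` applied to the (possibly vector valued)
function `f`: `∂f/∂s := |∂c/∂u|⁻¹ ∂f/∂u`. -/
noncomputable def aderiv {E F : Type*} [NormedAddCommGroup E] [NormedSpace ℝ E]
    [NormedAddCommGroup F] [NormedSpace ℝ F]
    (c : ℝ → E) (f : ℝ → F) (u : ℝ) : F :=
  ‖deriv c u‖⁻¹ • deriv f u

/-- Orthogonal projection of `ℝⁿ` onto the first two coordinates. -/
noncomputable def Pxy {n : ℕ} (x : EuclideanSpace ℝ (Fin n)) : EuclideanSpace ℝ (Fin 2) :=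
  WithLp.toLp 2 (fun i : Fin 2 => if h : (i : ℕ) < n then x ⟨i, h⟩ else 0)

/-- A `2π`-periodic curve is simple: injective on a period. -/
def SimpleOnPeriod {α : Type*} (f : ℝ → α) : Prop :=
  ∀ u ∈ Set.Ico (0:ℝ) (2*Real.pi), ∀ v ∈ Set.Ico (0:ℝ) (2*Real.pi), f u = f v → u = v

/-- A continuous closed plane curve is convex if it is simple and its image is the
frontier of the convex hull of its image. -/
def IsConvexCurve (c : ℝ → EuclideanSpace ℝ (Fin 2)) : Prop :=
  SimpleOnPeriod c ∧ Set.range c = frontier (convexHull ℝ (Set.range c))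

/-- A closed plane curve is uniformly convex if it is simple, immersed, and its
curvature `k̄ = ‖γ̄_s̄s̄‖` is positive everywhere. -/
def IsUniformlyConvexCurve (c : ℝ → EuclideanSpace ℝ (Fin 2)) : Prop :=
  SimpleOnPeriod c ∧ (∀ u, deriv c u ≠ 0) ∧ ∀ u, 0 < ‖aderiv c (aderiv c c) u‖

/-- A solution of the Space Curve Shortening flow on `[0,T)` in `ℝⁿ`. -/
structure IsCSF (n : ℕ) (T : ℝ) (γ : ℝ → ℝ → EuclideanSpace ℝ (Fin n)) : Prop where
  smooth : ContDiffOn ℝ (⊤ : ℕ∞) (fun p : ℝ × ℝ => γ p.1 p.2) (Set.univ ×ˢ Set.Ico 0 T)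
  periodic : ∀ u t, γ (u + 2*Real.pi) t = γ u t
  immersed : ∀ (u : ℝ), ∀ t ∈ Set.Ico (0:ℝ) T, deriv (fun v => γ v t) u ≠ 0
  flow : ∀ (u : ℝ), ∀ t ∈ Set.Ico (0:ℝ) T,
    derivWithin (fun τ => γ u τ) (Set.Ico 0 T) t
      = aderiv (fun v => γ v t) (fun v => aderiv (fun w => γ w t) (fun w => γ w t) v) u

/-- Counterclockwise rotation of a plane vector by `π/2`. -/
noncomputable def rot90 (w : EuclideanSpace ℝ (Fin 2)) : EuclideanSpace ℝ (Fin 2) :=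
  (WithLp.equiv 2 (Fin 2 → ℝ)).symm ![-(w 1), w 0]

/-- Signed curvature of a plane curve, defined by `γ̄_s̄s̄ = k̄ N̄` with `N̄ = rot90 T̄`. -/
noncomputable def signedCurv (c : ℝ → EuclideanSpace ℝ (Fin 2)) (u : ℝ) : ℝ :=
  inner ℝ (aderiv c (aderiv c c) u) (rot90 (aderiv c c u))

/-- There exist `k` points `u₁ < ⋯ < u_k < u₁ + 2π` on which `h` changes sign cyclically. -/
def SignChangeSeq (h : ℝ → ℝ) (k : ℕ) : Prop :=
  ∃ u : ℕ → ℝ, (∀ i j, i < j → j < k → u i < u j) ∧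
    (0 < k → u (k-1) < u 0 + 2*Real.pi) ∧
    (∀ i, i+1 < k → h (u i) * h (u (i+1)) < 0) ∧
    (0 < k → h (u (k-1)) * h (u 0) < 0)

/-- The sign-changing number of a `2π`-periodic function. -/
noncomputable def signChanges (h : ℝ → ℝ) : ℕ∞ :=
  sSup {N : ℕ∞ | ∃ k : ℕ, N = (k : ℕ∞) ∧ SignChangeSeq h k}

/-- The three-point condition with constant `Δ`: every affine plane meeting the curve in
at least three parameter values (per period) has slope at most `Δ`. -/
def ThreePointCond (γ : ℝ → EuclideanSpace ℝ (Fin 3)) (Δ : ℝ) : Prop :=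
  ∀ (m : EuclideanSpace ℝ (Fin 3)) (d : ℝ), m ≠ 0 →
    (3 : ℕ∞) ≤ ({u ∈ Set.Ico (0:ℝ) (2*Real.pi) | (inner ℝ m (γ u) : ℝ) = d}).encard →
    Real.sqrt ((m 0)^2 + (m 1)^2) ≤ Δ * |m 2|

/-! ### Auxiliary material for the proof -/

/-- `Pxy` as a linear map. -/
noncomputable def PxyLin (n : ℕ) : EuclideanSpace ℝ (Fin n) →ₗ[ℝ] EuclideanSpace ℝ (Fin 2) where
  toFun := Pxy
  map_add' x y := by
    ext i
    show (if h : (i:ℕ) < n then (x + y) ⟨i, h⟩ else 0)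
        = (if h : (i:ℕ) < n then x ⟨i, h⟩ else 0) + (if h : (i:ℕ) < n then y ⟨i, h⟩ else 0)
    split <;> simp
  map_smul' r x := by
    ext i
    show (if h : (i:ℕ) < n then (r • x) ⟨i, h⟩ else 0)
        = r • (if h : (i:ℕ) < n then x ⟨i, h⟩ else 0)
    split <;> simp

/-- `Pxy` as a continuous linear map. -/
noncomputable def PxyL (n : ℕ) : EuclideanSpace ℝ (Fin n) →L[ℝ] EuclideanSpace ℝ (Fin 2) :=
  LinearMap.toContinuousLinearMap (PxyLin n)

lemma PxyL_apply {n : ℕ} (x : EuclideanSpace ℝ (Fin n)) : PxyL n x = Pxy x := rfl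

/-- Decomposition of a vector orthogonal to a unit vector in the plane. -/
lemma decomp2 (Tv w : EuclideanSpace ℝ (Fin 2)) (hT : ‖Tv‖ = 1)
    (hperp : (inner ℝ w Tv : ℝ) = 0) :
    w = (inner ℝ w (rot90 Tv) : ℝ) • rot90 Tv := by
  have h1 : Tv 0 * Tv 0 + Tv 1 * Tv 1 = 1 := by
    have h := real_inner_self_eq_norm_sq Tv
    rw [hT] at h
    simp only [PiLp.inner_apply, RCLike.inner_apply, conj_trivial, Fin.sum_univ_two, one_pow] at h
    linarith
  have h2 : w 0 * Tv 0 + w 1 * Tv 1 = 0 := by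
    simp only [PiLp.inner_apply, RCLike.inner_apply, conj_trivial, Fin.sum_univ_two] at hperp
    linarith
  have e0 : rot90 Tv 0 = -(Tv 1) := rfl
  have e1 : rot90 Tv 1 = Tv 0 := rfl
  have hin : (inner ℝ w (rot90 Tv) : ℝ) = w 0 * (-(Tv 1)) + w 1 * Tv 0 := by
    simp only [PiLp.inner_apply, RCLike.inner_apply, conj_trivial, Fin.sum_univ_two, e0, e1]
    ring
  ext i
  fin_cases i
  · show w 0 = (inner ℝ w (rot90 Tv) : ℝ) * rot90 Tv 0
    rw [hin, e0]
    linear_combination (-(w 0)) * h1 + (Tv 0) * h2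
  · show w 1 = (inner ℝ w (rot90 Tv) : ℝ) * rot90 Tv 1
    rw [hin, e1]
    linear_combination (-(w 1)) * h1 + (Tv 1) * h2

/-- Scalar-vector algebra identity used in `partA`. -/
lemma scalarVec (P Q A B : ℝ) (hP : P ≠ 0) (hQ : Q ≠ 0) (B1 B2 : EuclideanSpace ℝ (Fin 2)) :
    P⁻¹ • (P⁻¹ • B2 + (-A / P^2) • B1)
      = (P⁻¹^2 * Q^2) • (Q⁻¹ • (Q⁻¹ • B2 + (-B / Q^2) • B1))
        + ((1/2) * (Q⁻¹ * (2 * P⁻¹ * (-A/P^2) * Q^2 + P⁻¹^2 * (2*Q*B)))) • (Q⁻¹ • B1) := by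
  match_scalars <;>
    · rw [← sub_eq_zero]
      field_simp
      try ring

/-- The core computation: relation between the `a`-arclength and `b`-arclength
second derivatives of `b`. -/
lemma partA {n : ℕ} (a : ℝ → EuclideanSpace ℝ (Fin n)) (b : ℝ → EuclideanSpace ℝ (Fin 2))
    (ha : ContDiff ℝ (⊤:ℕ∞) a) (hb : ContDiff ℝ (⊤:ℕ∞) b)
    (ha' : ∀ v, deriv a v ≠ 0) (hb' : ∀ v, deriv b v ≠ 0) (u : ℝ) :
    aderiv a (aderiv a b) u
      = (‖aderiv a b u‖^2) • aderiv b (aderiv b b) u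
        + ((1/2) * aderiv b (fun w => ‖aderiv a b w‖^2) u) • aderiv b b u := by
  have hda : Differentiable ℝ (deriv a) := (contDiff_infty_iff_deriv.mp ha).2.differentiable (by simp)
  have hdb : Differentiable ℝ (deriv b) := (contDiff_infty_iff_deriv.mp hb).2.differentiable (by simp)
  have hp : ∀ v, DifferentiableAt ℝ (fun w => ‖deriv a w‖) v := fun v => (hda v).norm ℝ (ha' v)
  have hq : ∀ v, DifferentiableAt ℝ (fun w => ‖deriv b w‖) v := fun v => (hdb v).norm ℝ (hb' v)
  have hpn : ∀ v, ‖deriv a v‖ ≠ 0 := fun v => norm_ne_zero_iff.mpr (ha' v)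
  have hqn : ∀ v, ‖deriv b v‖ ≠ 0 := fun v => norm_ne_zero_iff.mpr (hb' v)
  have hpinv : ∀ v, DifferentiableAt ℝ (fun w => ‖deriv a w‖⁻¹) v := fun v => (hp v).inv (hpn v)
  have hqinv : ∀ v, DifferentiableAt ℝ (fun w => ‖deriv b w‖⁻¹) v := fun v => (hq v).inv (hqn v)
  have e1 : deriv (aderiv a b) u
      = ‖deriv a u‖⁻¹ • deriv (deriv b) u
        + (-(deriv (fun w => ‖deriv a w‖) u) / ‖deriv a u‖^2) • deriv b u := by
    rw [show aderiv a b = fun v => ‖deriv a v‖⁻¹ • deriv b v from rfl,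
      deriv_fun_smul (hpinv u) (hdb u), deriv_fun_inv'' (hp u) (hpn u)]
  have e2 : deriv (aderiv b b) u
      = ‖deriv b u‖⁻¹ • deriv (deriv b) u
        + (-(deriv (fun w => ‖deriv b w‖) u) / ‖deriv b u‖^2) • deriv b u := by
    rw [show aderiv b b = fun v => ‖deriv b v‖⁻¹ • deriv b v from rfl,
      deriv_fun_smul (hqinv u) (hdb u), deriv_fun_inv'' (hq u) (hqn u)]
  have e3 : (fun w => ‖aderiv a b w‖^2) = fun w => (‖deriv a w‖⁻¹)^2 * ‖deriv b w‖^2 := by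
    funext w
    rw [show aderiv a b w = ‖deriv a w‖⁻¹ • deriv b w from rfl, norm_smul, mul_pow,
      Real.norm_eq_abs, sq_abs]
  have e4 : deriv (fun w => ‖aderiv a b w‖^2) u
      = (2 * ‖deriv a u‖⁻¹ * (-(deriv (fun w => ‖deriv a w‖) u) / ‖deriv a u‖^2)) * ‖deriv b u‖^2
        + (‖deriv a u‖⁻¹)^2 * (2 * ‖deriv b u‖ * deriv (fun w => ‖deriv b w‖) u) := by
    rw [e3, deriv_fun_mul ((hpinv u).fun_pow 2) ((hq u).fun_pow 2), deriv_fun_pow (hpinv u) 2,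
      deriv_fun_pow (hq u) 2, deriv_fun_inv'' (hp u) (hpn u)]
    push_cast
    ring
  rw [show aderiv a (aderiv a b) u = ‖deriv a u‖⁻¹ • deriv (aderiv a b) u from rfl,
    show aderiv b (aderiv b b) u = ‖deriv b u‖⁻¹ • deriv (aderiv b b) u from rfl,
    show aderiv b (fun w => ‖aderiv a b w‖^2) u
        = ‖deriv b u‖⁻¹ • deriv (fun w => ‖aderiv a b w‖^2) u from rfl,
    show aderiv b b u = ‖deriv b u‖⁻¹ • deriv b u from rfl,
    show aderiv a b u = ‖deriv a u‖⁻¹ • deriv b u from rfl,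
    e1, e2, e4, norm_smul, Real.norm_eq_abs, mul_pow, sq_abs, smul_eq_mul]
  exact scalarVec _ _ _ _ (hpn u) (hqn u) _ _

/-- Part B: subtracting the tangential part leaves the normal part `c k̄ N̄`. -/
lemma partB {n : ℕ} (a : ℝ → EuclideanSpace ℝ (Fin n)) (b : ℝ → EuclideanSpace ℝ (Fin 2))
    (hb : ContDiff ℝ (⊤:ℕ∞) b) (hb' : ∀ v, deriv b v ≠ 0) (u : ℝ)
    (S : EuclideanSpace ℝ (Fin 2))
    (hS : S = (‖aderiv a b u‖^2) • aderiv b (aderiv b b) u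
        + ((1/2) * aderiv b (fun w => ‖aderiv a b w‖^2) u) • aderiv b b u) :
    S - (inner ℝ S (aderiv b b u) : ℝ) • aderiv b b u
      = (‖aderiv a b u‖^2 * signedCurv b u) • rot90 (aderiv b b u) := by
  have hdb : Differentiable ℝ (deriv b) := (contDiff_infty_iff_deriv.mp hb).2.differentiable (by simp)
  have hq : ∀ v, DifferentiableAt ℝ (fun w => ‖deriv b w‖) v := fun v => (hdb v).norm ℝ (hb' v)
  have hqn : ∀ v, ‖deriv b v‖ ≠ 0 := fun v => norm_ne_zero_iff.mpr (hb' v)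
  have hTdiff : ∀ v, DifferentiableAt ℝ (aderiv b b) v := fun v => by
    rw [show aderiv b b = fun v => ‖deriv b v‖⁻¹ • deriv b v from rfl]
    exact ((hq v).inv (hqn v)).smul (hdb v)
  have hT1 : ∀ v, ‖aderiv b b v‖ = 1 := fun v => by
    rw [show aderiv b b v = ‖deriv b v‖⁻¹ • deriv b v from rfl, norm_smul, norm_inv,
      norm_norm, inv_mul_cancel₀ (hqn v)]
  have hperp : (inner ℝ (deriv (aderiv b b) u) (aderiv b b u) : ℝ) = 0 := by
    have hconst : (fun v => (inner ℝ (aderiv b b v) (aderiv b b v) : ℝ)) = fun _ => 1 := by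
      funext v
      rw [real_inner_self_eq_norm_sq, hT1 v, one_pow]
    have h0 : deriv (fun v => (inner ℝ (aderiv b b v) (aderiv b b v) : ℝ)) u = 0 := by
      rw [hconst]; exact deriv_const u 1
    rw [deriv_inner_apply ℝ (hTdiff u) (hTdiff u)] at h0
    have hcomm := real_inner_comm (aderiv b b u) (deriv (aderiv b b) u)
    linarith
  have hVperp : (inner ℝ (aderiv b (aderiv b b) u) (aderiv b b u) : ℝ) = 0 := by
    rw [show aderiv b (aderiv b b) u = ‖deriv b u‖⁻¹ • deriv (aderiv b b) u from rfl,
      real_inner_smul_left, hperp, mul_zero]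
  have hdecomp := decomp2 (aderiv b b u) (aderiv b (aderiv b b) u) (hT1 u) hVperp
  rw [hS, inner_add_left, real_inner_smul_left, real_inner_smul_left, hVperp,
    real_inner_self_eq_norm_sq, hT1 u, one_pow, mul_zero, mul_one, zero_add,
    add_sub_cancel_right, hdecomp, smul_smul]
  rfl

/-- Along a CSF solution with no vertical tangent lines at positive times,
the projection curve evolves by `∂_t γ̄ = c γ̄_s̄s̄ + (1/2) c_s̄ γ̄_s̄`, and its normal velocity
is `c k̄ N̄`. -/
theorem statement9 {n : ℕ} (T : ℝ)
    (γ : ℝ → ℝ → EuclideanSpace ℝ (Fin n))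
    (hCSF : IsCSF n T γ)
    (hvert : ∀ (u : ℝ), ∀ t ∈ Set.Ioo (0:ℝ) T, Pxy (deriv (fun v => γ v t) u) ≠ 0) :
    ∀ (u : ℝ), ∀ t ∈ Set.Ioo (0:ℝ) T,
      deriv (fun τ => Pxy (γ u τ)) t
        = (‖aderiv (fun z => γ z t) (fun z => Pxy (γ z t)) u‖^2) •
            aderiv (fun w => Pxy (γ w t))
              (aderiv (fun w => Pxy (γ w t)) (fun w => Pxy (γ w t))) u
          + ((1/2) * aderiv (fun w => Pxy (γ w t))
                (fun w => ‖aderiv (fun z => γ z t) (fun z => Pxy (γ z t)) w‖^2) u) •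
              aderiv (fun w => Pxy (γ w t)) (fun w => Pxy (γ w t)) u
      ∧ deriv (fun τ => Pxy (γ u τ)) t
          - (inner ℝ (deriv (fun τ => Pxy (γ u τ)) t)
              (aderiv (fun w => Pxy (γ w t)) (fun w => Pxy (γ w t)) u) : ℝ) •
              aderiv (fun w => Pxy (γ w t)) (fun w => Pxy (γ w t)) u
        = (‖aderiv (fun z => γ z t) (fun z => Pxy (γ z t)) u‖^2 *
              signedCurv (fun w => Pxy (γ w t)) u) •
            rot90 (aderiv (fun w => Pxy (γ w t)) (fun w => Pxy (γ w t)) u) := by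
  intro u t ht
  have htI : t ∈ Set.Ico (0:ℝ) T := ⟨ht.1.le, ht.2⟩
  have hsm : ContDiffOn ℝ (⊤:ℕ∞) (fun p : ℝ × ℝ => γ p.1 p.2) (Set.univ ×ˢ Set.Ico 0 T) :=
    hCSF.smooth.of_le (by simp)
  have ha : ContDiff ℝ (⊤:ℕ∞) (fun v => γ v t) := by
    rw [← contDiffOn_univ]
    exact hsm.comp ((contDiff_id.prodMk contDiff_const).contDiffOn) (fun v _ => ⟨trivial, htI⟩)
  have hb : ContDiff ℝ (⊤:ℕ∞) (fun w => Pxy (γ w t)) :=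
    (PxyL n).contDiff.comp ha
  have hDa : Differentiable ℝ (fun v => γ v t) := ha.differentiable (by simp)
  have ha' : ∀ v, deriv (fun v => γ v t) v ≠ 0 := fun v => hCSF.immersed v t htI
  have hder : ∀ v, deriv (fun w => Pxy (γ w t)) v = PxyL n (deriv (fun w => γ w t) v) := fun v =>
    (((PxyL n).hasFDerivAt).comp_hasDerivAt v (hDa v).hasDerivAt).deriv
  have hb' : ∀ v, deriv (fun w => Pxy (γ w t)) v ≠ 0 := fun v => by
    rw [hder v, PxyL_apply]
    exact hvert v t ht
  have hda : Differentiable ℝ (deriv (fun v => γ v t)) :=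
    (contDiff_infty_iff_deriv.mp ha).2.differentiable (by simp)
  have hp : ∀ v, DifferentiableAt ℝ (fun w => ‖deriv (fun z => γ z t) w‖) v := fun v =>
    (hda v).norm ℝ (ha' v)
  have hpn : ∀ v, ‖deriv (fun z => γ z t) v‖ ≠ 0 := fun v => norm_ne_zero_iff.mpr (ha' v)
  -- the projected flow equation
  have hA : deriv (fun τ => Pxy (γ u τ)) t
      = aderiv (fun v => γ v t) (aderiv (fun v => γ v t) (fun w => Pxy (γ w t))) u := by
    have hgamt : ContDiffOn ℝ (⊤:ℕ∞) (fun τ => γ u τ) (Set.Ico 0 T) :=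
      hsm.comp ((contDiff_const.prodMk contDiff_id).contDiffOn) (fun τ hτ => ⟨trivial, hτ⟩)
    have hmem : Set.Ico (0:ℝ) T ∈ nhds t :=
      mem_nhds_iff.mpr ⟨Set.Ioo 0 T, Set.Ioo_subset_Ico_self, isOpen_Ioo, ht⟩
    have hdt : DifferentiableAt ℝ (fun τ => γ u τ) t :=
      (hgamt.contDiffAt hmem).differentiableAt (by simp)
    have h1 : deriv (fun τ => Pxy (γ u τ)) t = PxyL n (deriv (fun τ => γ u τ) t) :=
      (((PxyL n).hasFDerivAt).comp_hasDerivAt t hdt.hasDerivAt).deriv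
    have h2 : deriv (fun τ => γ u τ) t
        = aderiv (fun v => γ v t) (fun v => aderiv (fun w => γ w t) (fun w => γ w t) v) u := by
      rw [← derivWithin_of_mem_nhds hmem]
      exact hCSF.flow u t htI
    rw [h1, h2]
    rw [show aderiv (fun v => γ v t) (fun v => aderiv (fun w => γ w t) (fun w => γ w t) v) u
        = ‖deriv (fun v => γ v t) u‖⁻¹ •
            deriv (aderiv (fun v => γ v t) (fun v => γ v t)) u from rfl,
      map_smul,
      show aderiv (fun v => γ v t) (aderiv (fun v => γ v t) (fun w => Pxy (γ w t))) u
        = ‖deriv (fun v => γ v t) u‖⁻¹ •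
            deriv (aderiv (fun v => γ v t) (fun w => Pxy (γ w t))) u from rfl]
    congr 1
    have hdiffaa : DifferentiableAt ℝ (aderiv (fun v => γ v t) (fun v => γ v t)) u := by
      rw [show aderiv (fun v => γ v t) (fun v => γ v t)
          = fun v => ‖deriv (fun z => γ z t) v‖⁻¹ • deriv (fun z => γ z t) v from rfl]
      exact ((hp u).inv (hpn u)).smul (hda u)
    have hcomm := (((PxyL n).hasFDerivAt).comp_hasDerivAt u hdiffaa.hasDerivAt).deriv
    rw [← hcomm]
    congr 1
    funext v
    show PxyL n (‖deriv (fun z => γ z t) v‖⁻¹ • deriv (fun z => γ z t) v)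
        = ‖deriv (fun z => γ z t) v‖⁻¹ • deriv (fun w => Pxy (γ w t)) v
    rw [map_smul, hder v]
  have key := partA (fun v => γ v t) (fun w => Pxy (γ w t)) ha hb ha' hb' u
  refine ⟨hA.trans key, ?_⟩
  exact partB (fun v => γ v t) (fun w => Pxy (γ w t)) hb hb' u _ (hA.trans key)
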